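/- arXiv:2001.09426 — 4 statements merged into one kernel-verified Lean document; each statement's English description precedes it below -/
import Mathlib

section
/- For r₀ = 0.31 and ψ(s) = s/tan(s), the function r ↦ 2 − r/tan(r/2) is positive and monotonically increasing on (0, r₀], and its value at r₀ is less than 0.02. -/
/-! Since `tan t > t` on `(0, π/2)`, we get `r / tan (r/2) < 2` on `(0, π)`. The numerator of the
derivative of `r ↦ r / tan (r/2)` is `tan (r/2) - r / (2 cos² (r/2))`, which has the sign of
`sin r - r < 0`, so this function decreases on `(0, π)`. The value at `0.31` follows from
`sin t ≤ t - t³/6 + t⁵/100` and `cos t ≥ 1 - t²/2` at `t = 0.155`. -/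

open Real Set

namespace Real

lemma tan_mul_two_mul_cos_sq (x : ℝ) : tan x * (2 * cos x ^ 2) = sin (2 * x) := by
  rw [tan_eq_sin_div_cos, sin_two_mul]
  rcases eq_or_ne (cos x) 0 with hc | hc
  · simp [hc]
  · field_simp

lemma sin_le_sub_cube_add {x : ℝ} (hx₀ : 0 ≤ x) (hx₁ : x ≤ 1) :
    sin x ≤ x - x ^ 3 / 6 + x ^ 5 / 100 := by
  have h := le_of_abs_le (sin_bound (by rwa [abs_of_nonneg hx₀]))
  rw [abs_of_nonneg hx₀] at h
  linarith

end Real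

lemma div_tan_half_lt_two {r : ℝ} (h₀ : 0 < r) (hπ : r < π) : r / tan (r / 2) < 2 := by
  have h : r / 2 < tan (r / 2) := lt_tan (by linarith) (by linarith)
  rw [div_lt_iff₀ (by linarith)]
  linarith

lemma hasDerivAt_div_tan_half {x : ℝ} (hc : cos (x / 2) ≠ 0) (ht : tan (x / 2) ≠ 0) :
    HasDerivAt (fun r => r / tan (r / 2))
      ((tan (x / 2) - x / (2 * cos (x / 2) ^ 2)) / tan (x / 2) ^ 2) x := by
  have htan : HasDerivAt (fun r => tan (r / 2)) (1 / cos (x / 2) ^ 2 * (1 / 2)) x := by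
    simpa [Function.comp_def] using (hasDerivAt_tan hc).comp x ((hasDerivAt_id x).div_const 2)
  exact ((hasDerivAt_id' x).div htan ht).congr_deriv (by ring)

lemma strictAntiOn_div_tan_half : StrictAntiOn (fun r => r / tan (r / 2)) (Ioo 0 π) := by
  have hpos : ∀ x ∈ Ioo 0 π, 0 < cos (x / 2) ∧ 0 < tan (x / 2) := fun x hx =>
    ⟨cos_pos_of_mem_Ioo ⟨by linarith [hx.1, pi_pos], by linarith [hx.2]⟩,
      tan_pos_of_pos_of_lt_pi_div_two (by linarith [hx.1]) (by linarith [hx.2])⟩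
  have hderiv x (hx : x ∈ Ioo 0 π) :=
    hasDerivAt_div_tan_half (hpos x hx).1.ne' (hpos x hx).2.ne'
  refine strictAntiOn_of_deriv_neg (convex_Ioo 0 π)
    (fun x hx => (hderiv x hx).continuousAt.continuousWithinAt) fun x hx => ?_
  rw [interior_Ioo] at hx
  obtain ⟨hcos, htan⟩ := hpos x hx
  rw [(hderiv x hx).deriv]
  refine div_neg_of_neg_of_pos (sub_neg.2 ?_) (by positivity)
  rw [lt_div_iff₀ (by positivity), tan_mul_two_mul_cos_sq, mul_div_cancel₀ x two_ne_zero]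
  exact sin_lt hx.1

lemma two_sub_div_tan_half_lt : 2 - 0.31 / tan (0.31 / 2) < (0.02 : ℝ) := by
  have hsin := sin_le_sub_cube_add (x := 0.155) (by norm_num) (by norm_num)
  have hcos := one_sub_sq_div_two_le_cos (x := 0.155)
  have hsin₀ : 0 < sin 0.155 := sin_pos_of_pos_of_lt_pi (by norm_num) (by linarith [pi_gt_three])
  rw [show (0.31 : ℝ) / 2 = 0.155 by norm_num, tan_eq_sin_div_cos, div_div_eq_mul_div,
    sub_lt_comm, lt_div_iff₀ hsin₀]
  nlinarith

theorem stmt_14 :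
    let r₀ : ℝ := 0.31
    let f : ℝ → ℝ := fun r => 2 - r / Real.tan (r / 2)
    (∀ r ∈ Set.Ioc (0:ℝ) r₀, 0 < f r) ∧
    MonotoneOn f (Set.Ioc (0:ℝ) r₀) ∧
    f r₀ < 0.02 := by
  intro r₀ f
  have hsub : Ioc 0 r₀ ⊆ Ioo 0 π := fun r hr =>
    ⟨hr.1, hr.2.trans_lt (by norm_num [r₀]; linarith [pi_gt_three])⟩
  refine ⟨fun r hr => sub_pos.2 (div_tan_half_lt_two (hsub hr).1 (hsub hr).2), ?_,
    two_sub_div_tan_half_lt⟩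
  exact fun a ha b hb hab =>
    sub_le_sub_left (strictAntiOn_div_tan_half.antitoneOn (hsub ha) (hsub hb) hab) 2
end

section
/- Let C₀ = 0.45, r₀ = 0.31, and L(1) = (2/16)(2 − 2ψ(C₀r + 3r/2)) + 2(1/2 + 1/16)(2 − 2ψ(C₀r + r/2)) with ψ(s) = s/tan(s). Then for all 0 < r ≤ r₀: (2/(2 − L(1)))·((1/4)C₀ + 1/4) < C₀ and (2/(2 − L(1)))·((1/8)C₀ + 1/4) < 1/2. -/
/-! From `sin s ≤ s` and `1 - s²/2 ≤ cos s` one gets `ψ(s) ≥ 1 - s²/2` on `(0, π/2)`, so each term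
`2 - 2ψ` of `L(1)` is at most the square of its argument. For `r ≤ 0.31` this gives `L(1) < 0.15`,
while the two inequalities amount to `L(1) < 7/18` and `L(1) < 31/40`. -/

/-- `ψ(s) = s / tan s`, with `ψ(0) = 1`. -/
noncomputable def psi (s : ℝ) : ℝ := if s = 0 then 1 else s / Real.tan s

open Real

lemma one_sub_sq_div_two_le_psi {s : ℝ} (hs₀ : 0 < s) (hs : s < π / 2) :
    1 - s ^ 2 / 2 ≤ psi s := by
  have hsin : 0 < sin s := sin_pos_of_pos_of_lt_pi hs₀ (by linarith [pi_pos])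
  have hcos : 0 < cos s := cos_pos_of_mem_Ioo ⟨by linarith, hs⟩
  have hsin_le : sin s ≤ s := (sin_lt hs₀).le
  have hcos_ge : 1 - s ^ 2 / 2 ≤ cos s := one_sub_sq_div_two_le_cos
  rw [psi, if_neg hs₀.ne', tan_eq_sin_div_cos, div_div_eq_mul_div, le_div_iff₀ hsin]
  nlinarith [mul_le_mul_of_nonneg_right hsin_le hcos.le,
    mul_le_mul_of_nonneg_left hcos_ge hsin.le]

lemma two_div_two_sub_mul_lt {L a b : ℝ} (ha : 0 ≤ a) (hb : 0 < b) (hL : L < 2 - 2 * a / b) :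
    2 / (2 - L) * a < b := by
  have hab : 2 * a / b < 2 - L := by linarith
  have hden : 0 < 2 - L := lt_of_le_of_lt (by positivity) hab
  rw [div_mul_eq_mul_div, div_lt_iff₀ hden]
  rw [div_lt_iff₀ hb] at hab
  linarith

theorem stmt_15 :
    let C₀ : ℝ := 0.45
    let r₀ : ℝ := 0.31
    ∀ r : ℝ, 0 < r → r ≤ r₀ →
      let L1 : ℝ :=
        (2/16) * (2 - 2 * psi (C₀ * r + 3 * r / 2))
          + 2 * (1/2 + 1/16) * (2 - 2 * psi (C₀ * r + r / 2))
      2 / (2 - L1) * ((1/4) * C₀ + 1/4) < C₀ ∧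
      2 / (2 - L1) * ((1/8) * C₀ + 1/4) < 1/2 := by
  intro C₀ r₀ r hr hr₀ L1
  have hpi := pi_gt_three
  have hψ₁ := one_sub_sq_div_two_le_psi (s := C₀ * r + 3 * r / 2) (by positivity)
    (by norm_num [C₀, r₀] at *; linarith)
  have hψ₂ := one_sub_sq_div_two_le_psi (s := C₀ * r + r / 2) (by positivity)
    (by norm_num [C₀, r₀] at *; linarith)
  have hL1 : L1 < 0.15 := by
    have hr2 : r ^ 2 ≤ 0.31 ^ 2 := pow_le_pow_left₀ hr.le hr₀ 2
    norm_num [L1, C₀] at *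
    nlinarith
  constructor <;> apply two_div_two_sub_mul_lt <;> norm_num [C₀] at * <;> linarith
end

section
/- Let C₀ = 0.16, r₀ = 0.4, and L(1) = (1/32)(2 − 2ψ(C₀r + 1.35r)) + (65/100 + 1/160)(2 − 2ψ(C₀r + 0.35r)) + (35/100 + 9/160)(2 − 2ψ(C₀r + 0.65r)) + (1/32)(2 − 2ψ(C₀r + 1.65r)) with ψ(s) = s/tan(s). Then for all 0 < r ≤ r₀: (2/(2 − L(1)))·((1/8)C₀ + 53/400) < C₀ and (2/(2 − L(1)))·((1/16)C₀ + 53/400) < 0.15. -/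
open Real

lemma psi_eq_mul_cos_div_sin {s : ℝ} (hs : s ≠ 0) : psi s = s * cos s / sin s := by
  rw [psi, if_neg hs, tan_eq_sin_div_cos, div_div_eq_mul_div]

lemma sin_le_of_le_one {s : ℝ} (hs₀ : 0 ≤ s) (hs₁ : s ≤ 1) :
    sin s ≤ s - s ^ 3 / 6 + s ^ 5 / 100 := by
  have h := (abs_le.mp (sin_bound (abs_le.mpr ⟨by linarith, hs₁⟩))).2
  rw [abs_of_nonneg hs₀] at h
  linarith

lemma one_sub_mul_sq_le_psi {s : ℝ} (hs₀ : 0 < s) (hs : s ≤ 0.73) :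
    1 - 0.475 * s ^ 2 ≤ psi s := by
  have hsin : 0 < sin s := sin_pos_of_pos_of_lt_pi hs₀ (by linarith [pi_gt_three])
  rw [psi_eq_mul_cos_div_sin hs₀.ne', le_div_iff₀ hsin]
  calc (1 - 0.475 * s ^ 2) * sin s
      ≤ (1 - 0.475 * s ^ 2) * (s - s ^ 3 / 6 + s ^ 5 / 100) := by
        gcongr
        · nlinarith
        · exact sin_le_of_le_one hs₀.le (by linarith)
    _ ≤ s * (1 - s ^ 2 / 2) := by
        have hs2 : s ^ 2 ≤ 0.5329 := by nlinarith
        -- `hdiff` is exactly the difference of the two sides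
        have hdiff : 0 ≤ s ^ 3 * ((0.475 - 1 / 3) - (0.475 / 6 + 1 / 100) * s ^ 2
            + 0.475 / 100 * s ^ 4) := by
          apply mul_nonneg (by positivity)
          linarith [pow_nonneg hs₀.le 4]
        linarith
    _ ≤ s * cos s := by gcongr; exact one_sub_sq_div_two_le_cos

lemma weighted_sum_two_sub_two_psi_le {r : ℝ} (hr : 0 < r) (hr₀ : r ≤ 0.4) :
    (1/32) * (2 - 2 * psi (0.16 * r + 1.35 * r))
      + (65/100 + 1/160) * (2 - 2 * psi (0.16 * r + 0.35 * r))
      + (35/100 + 9/160) * (2 - 2 * psi (0.16 * r + 0.65 * r))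
      + (1/32) * (2 - 2 * psi (0.16 * r + 1.65 * r)) ≤ 0.093 := by
  have h₁ := one_sub_mul_sq_le_psi (s := 0.16 * r + 1.35 * r) (by positivity) (by linarith)
  have h₂ := one_sub_mul_sq_le_psi (s := 0.16 * r + 0.35 * r) (by positivity) (by linarith)
  have h₃ := one_sub_mul_sq_le_psi (s := 0.16 * r + 0.65 * r) (by positivity) (by linarith)
  have h₄ := one_sub_mul_sq_le_psi (s := 0.16 * r + 1.65 * r) (by positivity) (by linarith)
  have hr2 : r ^ 2 ≤ 0.16 := by nlinarith
  linarith

theorem stmt_18 :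
    let C₀ : ℝ := 0.16
    let r₀ : ℝ := 0.4
    ∀ r : ℝ, 0 < r → r ≤ r₀ →
      let L1 : ℝ :=
        (1/32) * (2 - 2 * psi (C₀ * r + 1.35 * r))
          + (65/100 + 1/160) * (2 - 2 * psi (C₀ * r + 0.35 * r))
          + (35/100 + 9/160) * (2 - 2 * psi (C₀ * r + 0.65 * r))
          + (1/32) * (2 - 2 * psi (C₀ * r + 1.65 * r))
      2 / (2 - L1) * ((1/8) * C₀ + 53/400) < C₀ ∧
      2 / (2 - L1) * ((1/16) * C₀ + 53/400) < 0.15 := by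
  intro C₀ r₀ r hr hr₀ L1
  have hL1 : L1 ≤ 0.093 := weighted_sum_two_sub_two_psi_le hr hr₀
  have hpos : 0 < 2 - L1 := by linarith
  constructor <;> rw [div_mul_eq_mul_div, div_lt_iff₀ hpos] <;> norm_num [C₀] <;> linarith
end

section
/- Let (x_i) be a sequence in a complete metric space and T a map on sequences satisfying: (i) contractivity, dist(T^k x_{i+1}, T^k x_i) ≤ μ^k · sup_ℓ dist(x_ℓ, x_{ℓ+1}) for some μ ∈ (0,1) and all i, k; and (ii) the displacement-safe condition dist(Tx_{2i}, x_i) ≤ C · sup_ℓ dist(x_ℓ, x_{ℓ+1}) for some C > 0. Define piecewise-linear-in-parameter functions f_k on ℝ with f_k(i/2^k) = T^k x_i interpolated along the index. Then sup_i dist(T^{k+1} x_{2i}, T^k x_i) ≤ C μ^k δ where δ = sup_ℓ dist(x_ℓ, x_{ℓ+1}), and consequently the sequence (f_k) is uniformly Cauchy on compact sets, so T converges to a continuous limit. -/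
/-!
Applying the displacement-safe condition to the level-`k` data `T^k x`, whose consecutive
distances are at most `μ^k δ` by contractivity, gives the key estimate
`dist (T^{k+1} x_{2i}) (T^k x_i) ≤ C μ^k δ`. Since the parameter `i/2^k` of `T^k x_i` is the
parameter of `T^{k+1} x_{2i}`, the values at a fixed dyadic parameter move by a geometrically
decreasing amount from one level to the next, so the tail beyond level `k` is at most
`μ^k C δ / (1 - μ)`, uniformly in `i`.
-/

open Finset Filter

section Refinement

variable {M : Type*} [PseudoMetricSpace M]

lemma iSup_dist_succ_le {y : ℤ → M} {B : ℝ} (hy : ∀ i, dist (y (i + 1)) (y i) ≤ B) :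
    ⨆ ℓ : ℤ, dist (y ℓ) (y (ℓ + 1)) ≤ B :=
  ciSup_le fun ℓ => (dist_comm _ _).trans_le (hy ℓ)

lemma bddAbove_range_dist_succ {y : ℤ → M} {B : ℝ} (hy : ∀ i, dist (y (i + 1)) (y i) ≤ B) :
    BddAbove (Set.range fun ℓ : ℤ => dist (y ℓ) (y (ℓ + 1))) :=
  ⟨B, by rintro _ ⟨ℓ, rfl⟩; exact (dist_comm _ _).trans_le (hy ℓ)⟩

lemma dist_refine_two_mul_le {T : (ℤ → M) → (ℤ → M)} {C : ℝ} (hC : 0 ≤ C)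
    (hdisp : ∀ y : ℤ → M, BddAbove (Set.range fun ℓ : ℤ => dist (y ℓ) (y (ℓ + 1))) →
      ∀ i : ℤ, dist (T y (2 * i)) (y i) ≤ C * ⨆ ℓ : ℤ, dist (y ℓ) (y (ℓ + 1)))
    {y : ℤ → M} {B : ℝ} (hy : ∀ i, dist (y (i + 1)) (y i) ≤ B) (i : ℤ) :
    dist (T y (2 * i)) (y i) ≤ C * B :=
  (hdisp y (bddAbove_range_dist_succ hy) i).trans
    (mul_le_mul_of_nonneg_left (iSup_dist_succ_le hy) hC)

variable {y : ℕ → ℤ → M} {A μ : ℝ}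

lemma dist_le_geometric_tail_of_dist_refine_le (hμ₀ : 0 ≤ μ) (hμ₁ : μ < 1)
    (hy : ∀ k i, dist (y (k + 1) (2 * i)) (y k i) ≤ A * μ ^ k) (k n : ℕ) (i : ℤ) :
    dist (y k i) (y (k + n) (2 ^ n * i)) ≤ μ ^ k * (A / (1 - μ)) := by
  have hA : 0 ≤ A := by simpa using dist_nonneg.trans (hy 0 0)
  have hstep : ∀ j, dist (y (k + j) (2 ^ j * i)) (y (k + (j + 1)) (2 ^ (j + 1) * i))
      ≤ A * μ ^ k * μ ^ j := fun j => by
    rw [dist_comm, pow_succ', mul_assoc, ← add_assoc, mul_assoc A, ← pow_add]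
    exact hy (k + j) _
  have hgeom : ∑ j ∈ range n, μ ^ j ≤ 1 / (1 - μ) := by
    simpa [← Finset.range_eq_Ico] using geom_sum_Ico_le_of_lt_one (m := 0) (n := n) hμ₀ hμ₁
  calc dist (y k i) (y (k + n) (2 ^ n * i))
      ≤ ∑ j ∈ range n, A * μ ^ k * μ ^ j := by
        simpa using dist_le_range_sum_of_dist_le (f := fun j => y (k + j) (2 ^ j * i)) n
          fun _ => hstep _
    _ = A * μ ^ k * ∑ j ∈ range n, μ ^ j := (mul_sum _ _ _).symm
    _ ≤ A * μ ^ k * (1 / (1 - μ)) := by gcongr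
    _ = μ ^ k * (A / (1 - μ)) := by ring

lemma uniformCauchy_of_dist_refine_le (hμ₀ : 0 ≤ μ) (hμ₁ : μ < 1)
    (hy : ∀ k i, dist (y (k + 1) (2 * i)) (y k i) ≤ A * μ ^ k) :
    ∀ ε > 0, ∃ N : ℕ, ∀ k m : ℕ, N ≤ k → k ≤ m → ∀ i : ℤ,
      dist (y k i) (y m (2 ^ (m - k) * i)) < ε := by
  intro ε hε
  have htail : Tendsto (fun k => μ ^ k * (A / (1 - μ))) atTop (nhds 0) := by
    simpa using (tendsto_pow_atTop_nhds_zero_of_lt_one hμ₀ hμ₁).mul_const (A / (1 - μ))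
  obtain ⟨N, hN⟩ := eventually_atTop.1 ((tendsto_order.1 htail).2 ε hε)
  refine ⟨N, fun k m hNk hkm i => ?_⟩
  obtain ⟨n, rfl⟩ := Nat.exists_eq_add_of_le hkm
  rw [Nat.add_sub_cancel_left]
  exact (dist_le_geometric_tail_of_dist_refine_le hμ₀ hμ₁ hy k n i).trans_lt (hN k hNk)

end Refinement

theorem stmt_19_general {M : Type*} [MetricSpace M]
    (T : (ℤ → M) → (ℤ → M)) (x : ℤ → M) (μ C : ℝ)
    (hμ : μ ∈ Set.Ioo (0:ℝ) 1) (hC : 0 < C)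
    (δ : ℝ)
    -- (i) contractivity of the scheme:
    (hcontr : ∀ k : ℕ, ∀ i : ℤ,
      dist ((T^[k] x) (i+1)) ((T^[k] x) i) ≤ μ^k * δ)
    -- (ii) displacement-safe condition (valid for any data, in particular all iterates):
    (hdisp : ∀ y : ℤ → M, BddAbove (Set.range fun ℓ : ℤ => dist (y ℓ) (y (ℓ+1))) →
      ∀ i : ℤ, dist (T y (2*i)) (y i) ≤ C * ⨆ ℓ : ℤ, dist (y ℓ) (y (ℓ+1))) :
    (∀ k : ℕ, ∀ i : ℤ, dist ((T^[k+1] x) (2*i)) ((T^[k] x) i) ≤ C * μ^k * δ) ∧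
    (∀ ε > 0, ∃ N : ℕ, ∀ k m : ℕ, N ≤ k → k ≤ m → ∀ i : ℤ,
      dist ((T^[k] x) i) ((T^[m] x) (2^(m-k) * i)) < ε) := by
  have key : ∀ k : ℕ, ∀ i : ℤ, dist ((T^[k+1] x) (2*i)) ((T^[k] x) i) ≤ C * μ^k * δ := by
    intro k i
    rw [Function.iterate_succ_apply', mul_assoc]
    exact dist_refine_two_mul_le hC.le hdisp (hcontr k) i
  refine ⟨key, uniformCauchy_of_dist_refine_le (y := fun k => T^[k] x) (A := C * δ) hμ.1.le hμ.2
    fun k i => (key k i).trans_eq (by ring)⟩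

/-- abstract form of Theorem 1: for data `x : ℤ → M` in a complete
metric space and a refinement operator `T` on sequences satisfying contractivity
and the displacement-safe condition, the key estimate
`sup_i dist(T^{k+1}x_{2i}, T^k x_i) ≤ C μ^k δ` holds, and the refined data is
uniformly Cauchy across levels (comparing dyadic parameter values `i/2^k`),
which yields convergence of the interpolants to a continuous limit. -/
theorem stmt_19 {M : Type*} [MetricSpace M] [CompleteSpace M]
    (T : (ℤ → M) → (ℤ → M)) (x : ℤ → M) (μ C : ℝ)
    (hμ : μ ∈ Set.Ioo (0:ℝ) 1) (hC : 0 < C)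
    (δ : ℝ) (hδ : δ = ⨆ ℓ : ℤ, dist (x ℓ) (x (ℓ+1)))
    (hbdd : BddAbove (Set.range fun ℓ : ℤ => dist (x ℓ) (x (ℓ+1))))
    -- (i) contractivity of the scheme:
    (hcontr : ∀ k : ℕ, ∀ i : ℤ,
      dist ((T^[k] x) (i+1)) ((T^[k] x) i) ≤ μ^k * δ)
    -- (ii) displacement-safe condition (valid for any data, in particular all iterates):
    (hdisp : ∀ y : ℤ → M, BddAbove (Set.range fun ℓ : ℤ => dist (y ℓ) (y (ℓ+1))) →
      ∀ i : ℤ, dist (T y (2*i)) (y i) ≤ C * ⨆ ℓ : ℤ, dist (y ℓ) (y (ℓ+1))) :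
    (∀ k : ℕ, ∀ i : ℤ, dist ((T^[k+1] x) (2*i)) ((T^[k] x) i) ≤ C * μ^k * δ) ∧
    (∀ ε > 0, ∃ N : ℕ, ∀ k m : ℕ, N ≤ k → k ≤ m → ∀ i : ℤ,
      dist ((T^[k] x) i) ((T^[m] x) (2^(m-k) * i)) < ε) :=
  stmt_19_general T x μ C hμ hC δ hcontr hdisp
end
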